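/- arXiv:2403.05120 — 3 statements merged into one kernel-verified Lean document; each statement's English description precedes it below -/
import Mathlib

section
/- If G is a connected graph with at least 2 vertices having a universal vertex, then the mutual-visibility number of the double graph D(G) equals 2n(G) − 1. -/
open SimpleGraph

variable {V : Type*}

/-- A walk is a shortest path if it is a path and its length equals the distance
between its endpoints. -/
def SimpleGraph.IsShortestPath (G : SimpleGraph V) {u v : V} (p : G.Walk u v) : Prop :=
  p.IsPath ∧ p.length = G.dist u v

/-- `S` is a general position set: no three vertices of `S` lie on a common shortest path. -/
def SimpleGraph.IsGPSet (G : SimpleGraph V) (S : Set V) : Prop :=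
  ∀ ⦃u v : V⦄ (p : G.Walk u v), G.IsShortestPath p →
    ∀ x ∈ S, ∀ y ∈ S, ∀ z ∈ S, x ≠ y → x ≠ z → y ≠ z →
      ¬ (x ∈ p.support ∧ y ∈ p.support ∧ z ∈ p.support)

/-- `u` and `v` are `S`-visible: some shortest `u,v`-path has no internal vertex in `S`. -/
def SimpleGraph.SVisible (G : SimpleGraph V) (S : Set V) (u v : V) : Prop :=
  ∃ p : G.Walk u v, G.IsShortestPath p ∧ ∀ w ∈ p.support, w ≠ u → w ≠ v → w ∉ S

/-- `S` is a mutual-visibility set. -/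
def SimpleGraph.IsMVSet (G : SimpleGraph V) (S : Set V) : Prop :=
  ∀ u ∈ S, ∀ v ∈ S, u ≠ v → G.SVisible S u v

/-- `S` is a total mutual-visibility set. -/
def SimpleGraph.IsTotalMVSet (G : SimpleGraph V) (S : Set V) : Prop :=
  ∀ u v : V, u ≠ v → G.SVisible S u v

/-- `S` is an outer mutual-visibility set. -/
def SimpleGraph.IsOuterMVSet (G : SimpleGraph V) (S : Set V) : Prop :=
  G.IsMVSet S ∧ ∀ u ∈ S, ∀ v ∉ S, u ≠ v → G.SVisible S u v

/-- The mutual-visibility number `μ(G)`. -/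
noncomputable def SimpleGraph.mutualVisibilityNumber (G : SimpleGraph V) [Fintype V] : ℕ :=
  sSup {k | ∃ S : Finset V, G.IsMVSet ↑S ∧ S.card = k}

/-- The total mutual-visibility number `μ_t(G)`. -/
noncomputable def SimpleGraph.totalMutualVisibilityNumber (G : SimpleGraph V) [Fintype V] : ℕ :=
  sSup {k | ∃ S : Finset V, G.IsTotalMVSet ↑S ∧ S.card = k}

/-- The outer mutual-visibility number `μ_o(G)`. -/
noncomputable def SimpleGraph.outerMutualVisibilityNumber (G : SimpleGraph V) [Fintype V] : ℕ :=
  sSup {k | ∃ S : Finset V, G.IsOuterMVSet ↑S ∧ S.card = k}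

/-- The general position number `gp(G)`. -/
noncomputable def SimpleGraph.gpNumber (G : SimpleGraph V) [Fintype V] : ℕ :=
  sSup {k | ∃ S : Finset V, G.IsGPSet ↑S ∧ S.card = k}

/-- The double graph `D(G)`: two copies of each vertex, `(u, b)` adjacent to `(v, c)`
iff `u` adjacent to `v` in `G`. -/
def SimpleGraph.doubleGraph (G : SimpleGraph V) : SimpleGraph (V × Bool) where
  Adj x y := G.Adj x.1 y.1
  symm := ⟨fun _ _ h => G.adj_symm h⟩
  loopless := ⟨fun x h => G.irrefl (v := x.1) h⟩

/-- The Mycielskian `M(G)`: `some (u, false)` are the original vertices, `some (u, true)`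
their copies, and `none` is the apex vertex `v*`. -/
def SimpleGraph.mycielskian (G : SimpleGraph V) : SimpleGraph (Option (V × Bool)) where
  Adj x y := match x, y with
    | some (u, false), some (v, false) => G.Adj u v
    | some (u, false), some (v, true) => G.Adj u v
    | some (u, true), some (v, false) => G.Adj u v
    | some (_, true), none => True
    | none, some (_, true) => True
    | _, _ => False
  symm := by
    constructor
    rintro (_ | ⟨u, (_|_)⟩) (_ | ⟨v, (_|_)⟩) h <;>
      first
        | exact h
        | exact G.adj_symm h
  loopless := by
    constructor
    rintro (_ | ⟨u, (_|_)⟩) h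
    · exact h
    · exact G.irrefl h
    · exact h

/-!
Two twins `(u, false)` and `(u, true)` of `D(G)` are distinct and non-adjacent, so every path
between them has an internal vertex; hence the whole vertex set is not a mutual-visibility set
and `μ(D(G)) ≤ 2n - 1`. Conversely, if `v` is universal in `G`, then `(v, true)` is adjacent to
every vertex of `D(G)` except its twin, so any two non-adjacent vertices other than `(v, true)`
are joined by a shortest path of length two through it: removing `(v, true)` leaves a
mutual-visibility set of size `2n - 1`.
-/

namespace SimpleGraph

variable {G : SimpleGraph V}

theorem sVisible_of_adj {S : Set V} {u w : V} (h : G.Adj u w) : G.SVisible S u w := by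
  refine ⟨.cons h .nil, ⟨by simp [h.ne], ?_⟩, ?_⟩
  · simp [dist_eq_one_iff_adj.mpr h]
  · simp +contextual

theorem sVisible_of_adj_of_adj {S : Set V} {u x w : V} (huw : u ≠ w) (hnadj : ¬G.Adj u w)
    (hux : G.Adj u x) (hxw : G.Adj x w) (hx : x ∉ S) : G.SVisible S u w := by
  let p : G.Walk u w := .cons hux (.cons hxw .nil)
  have hdist_le : G.dist u w ≤ 2 := by simpa [p] using G.dist_le p
  have hdist_ne_zero : G.dist u w ≠ 0 := fun h => huw (p.reachable.dist_eq_zero_iff.mp h)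
  have hdist_ne_one : G.dist u w ≠ 1 := fun h => hnadj (dist_eq_one_iff_adj.mp h)
  refine ⟨p, ⟨?_, ?_⟩, ?_⟩
  · simp [p, hux.ne, hxw.ne, huw]
  · simp only [p, Walk.length_cons, Walk.length_nil]
    omega
  · simp only [p, Walk.support_cons, Walk.support_nil, List.mem_cons, List.not_mem_nil,
      or_false]
    rintro y (rfl | rfl | rfl) hyu hyw
    exacts [absurd rfl hyu, hx, absurd rfl hyw]

theorem not_sVisible_univ_of_not_adj {u w : V} (huw : u ≠ w) (hnadj : ¬G.Adj u w) :
    ¬G.SVisible Set.univ u w := by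
  rintro ⟨p, -, hint⟩
  cases p with
  | nil => exact huw rfl
  | @cons _ x _ hux q =>
    have hxw : x ≠ w := by rintro rfl; exact hnadj hux
    exact hint x (by simp) hux.ne.symm hxw trivial

theorem not_isMVSet_univ_of_not_adj {u w : V} (huw : u ≠ w) (hnadj : ¬G.Adj u w) :
    ¬G.IsMVSet Set.univ := fun hS =>
  not_sVisible_univ_of_not_adj huw hnadj (hS u trivial w trivial huw)

theorem isMVSet_compl_singleton {x : V}
    (hx : ∀ u w, u ≠ x → w ≠ x → u ≠ w → ¬G.Adj u w → G.Adj u x ∧ G.Adj x w) :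
    G.IsMVSet {x}ᶜ := by
  intro u hu w hw huw
  by_cases hadj : G.Adj u w
  · exact sVisible_of_adj hadj
  · obtain ⟨hux, hxw⟩ := hx u w hu hw huw hadj
    exact sVisible_of_adj_of_adj huw hadj hux hxw (by simp)

section Number

variable [Fintype V]

theorem le_mutualVisibilityNumber {S : Finset V} (hS : G.IsMVSet S) :
    S.card ≤ G.mutualVisibilityNumber :=
  le_csSup ⟨Fintype.card V, by rintro k ⟨T, -, rfl⟩; exact T.card_le_univ⟩ ⟨S, hS, rfl⟩

theorem mutualVisibilityNumber_le_card_sub_one {u w : V} (huw : u ≠ w) (hnadj : ¬G.Adj u w) :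
    G.mutualVisibilityNumber ≤ Fintype.card V - 1 := by
  classical
  refine csSup_le' ?_
  rintro k ⟨S, hS, rfl⟩
  have hS_ne_univ : S ≠ Finset.univ := by
    rintro rfl
    exact not_isMVSet_univ_of_not_adj huw hnadj (by simpa using hS)
  have hlt : S.card < Fintype.card V := by
    simpa using Finset.card_lt_card (Finset.ssubset_univ_iff.mpr hS_ne_univ)
  omega

end Number

@[simp]
theorem doubleGraph_adj {x y : V × Bool} : G.doubleGraph.Adj x y ↔ G.Adj x.1 y.1 := Iff.rfl

theorem isMVSet_doubleGraph_compl_twin {v : V} (hv : ∀ w, w ≠ v → G.Adj v w) :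
    G.doubleGraph.IsMVSet {(v, true)}ᶜ := by
  have hfst_ne : ∀ u w : V × Bool, u ≠ (v, true) → w ≠ (v, true) → u ≠ w →
      ¬G.doubleGraph.Adj u w → u.1 ≠ v := by
    intro u w hu hw huw hnadj hu1
    have hw1 : w.1 ≠ v := by
      intro hw1
      apply huw
      obtain ⟨_, _ | _⟩ := u <;> obtain ⟨_, _ | _⟩ := w <;> simp_all
    exact hnadj (by simpa [hu1] using hv w.1 hw1)
  refine isMVSet_compl_singleton fun u w hu hw huw hnadj => ⟨?_, ?_⟩
  · exact (hv u.1 (hfst_ne u w hu hw huw hnadj)).symm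
  · exact hv w.1 (hfst_ne w u hw hu huw.symm fun h => hnadj h.symm)

end SimpleGraph

theorem mu_double_universal_general [Fintype V] (G : SimpleGraph V)
    (huniv : ∃ v : V, ∀ w : V, w ≠ v → G.Adj v w) :
    G.doubleGraph.mutualVisibilityNumber = 2 * Fintype.card V - 1 := by
  classical
  obtain ⟨v, hv⟩ := huniv
  have hcard : Fintype.card (V × Bool) = 2 * Fintype.card V := by
    rw [Fintype.card_prod, Fintype.card_bool, mul_comm]
  apply le_antisymm
  · have h := mutualVisibilityNumber_le_card_sub_one (G := G.doubleGraph)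
      (u := (v, false)) (w := (v, true)) (by simp) (G.irrefl)
    rwa [hcard] at h
  · have h := le_mutualVisibilityNumber (S := {((v, true) : V × Bool)}ᶜ)
      (by simpa using isMVSet_doubleGraph_compl_twin hv)
    rwa [Finset.card_compl, Finset.card_singleton, hcard] at h

theorem mu_double_universal [Fintype V] (G : SimpleGraph V) (hconn : G.Connected)
    (hn : 2 ≤ Fintype.card V) (huniv : ∃ v : V, ∀ w : V, w ≠ v → G.Adj v w) :
    G.doubleGraph.mutualVisibilityNumber = 2 * Fintype.card V - 1 :=
  mu_double_universal_general G huniv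
end

section
/- For every connected graph G, gp(D(G)) = 2·gp(G) holds if and only if every gp-set of D(G) has the form X ∪ X' where X is an independent gp-set of G. -/
open SimpleGraph

variable {V : Type*}

/-!
Projecting a general position set `S` of `D(G)` to `G` by `π : (u, b) ↦ u` gives a general position set, because
each section `v ↦ (v, f v)` of the projection is a distance-preserving embedding `G → D(G)`.
Since `S` lies in `π(S) × {0, 1}`, this gives `|S| ≤ 2 gp(G)`, and equality forces
`S = π(S) × {0, 1}` with `π(S)` a gp-set of `G`. It also forces `π(S)` to be independent:
for an edge `ab`, the twins `a, a'` are at distance two with common neighbour `b`,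
so `a, b, a'` lie on a shortest path.
-/

namespace SimpleGraph

variable {W : Type*} {G : SimpleGraph V} {H : SimpleGraph W}

theorem Hom.edist_map_le (φ : G →g H) (u v : V) : H.edist (φ u) (φ v) ≤ G.edist u v :=
  le_iInf fun p => (p.map φ).edist_le.trans_eq (by rw [Walk.length_map])

theorem Hom.dist_map_of_leftInverse {φ : G →g H} {ψ : H →g G} (h : Function.LeftInverse ψ φ)
    (u v : V) : H.dist (φ u) (φ v) = G.dist u v := by
  have hedist : H.edist (φ u) (φ v) = G.edist u v :=
    le_antisymm (φ.edist_map_le u v) (by simpa only [h u, h v] using ψ.edist_map_le (φ u) (φ v))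
  exact congrArg ENat.toNat hedist

theorem IsShortestPath.map_of_leftInverse {φ : G →g H} {ψ : H →g G}
    (h : Function.LeftInverse ψ φ) {u v : V} {p : G.Walk u v} (hp : G.IsShortestPath p) :
    H.IsShortestPath (p.map φ) :=
  ⟨hp.1.map h.injective, by rw [Walk.length_map, hp.2, Hom.dist_map_of_leftInverse h]⟩

theorem IsGPSet.preimage_of_leftInverse {φ : G →g H} {ψ : H →g G}
    (h : Function.LeftInverse ψ φ) {S : Set W} (hS : H.IsGPSet S) : G.IsGPSet (φ ⁻¹' S) := by
  intro u v p hp x hx y hy z hz hxy hxz hyz ⟨hxp, hyp, hzp⟩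
  refine hS (p.map φ) (hp.map_of_leftInverse h) _ hx _ hy _ hz
    (h.injective.ne hxy) (h.injective.ne hxz) (h.injective.ne hyz) ?_
  rw [Walk.support_map]
  exact ⟨List.mem_map_of_mem hxp, List.mem_map_of_mem hyp, List.mem_map_of_mem hzp⟩

theorem isGPSet_empty : G.IsGPSet ∅ := fun _ _ _ _ _ hx => hx.elim

section gpNumber

variable [Fintype V]

theorem bddAbove_isGPSet_card :
    BddAbove {k | ∃ S : Finset V, G.IsGPSet ↑S ∧ S.card = k} :=
  ⟨Fintype.card V, by rintro _ ⟨S, -, rfl⟩; exact S.card_le_univ⟩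

theorem IsGPSet.card_le_gpNumber {S : Finset V} (hS : G.IsGPSet ↑S) : S.card ≤ G.gpNumber :=
  le_csSup bddAbove_isGPSet_card ⟨S, hS, rfl⟩

theorem exists_isGPSet_card_eq_gpNumber (G : SimpleGraph V) :
    ∃ S : Finset V, G.IsGPSet ↑S ∧ S.card = G.gpNumber := by
  refine Nat.sSup_mem ?_ bddAbove_isGPSet_card
  exact ⟨0, ∅, by simpa using G.isGPSet_empty, rfl⟩

end gpNumber

def doubleGraphFst (G : SimpleGraph V) : G.doubleGraph →g G := ⟨Prod.fst, id⟩

def doubleGraphSection (G : SimpleGraph V) (f : V → Bool) : G →g G.doubleGraph :=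
  ⟨fun v => (v, f v), id⟩

theorem IsGPSet.image_fst_of_doubleGraph {S : Set (V × Bool)} (hS : G.doubleGraph.IsGPSet S) :
    G.IsGPSet (Prod.fst '' S) := by
  classical
  let f : V → Bool := fun w => decide ((w, true) ∈ S)
  have himage : Prod.fst '' S = G.doubleGraphSection f ⁻¹' S := by
    ext w
    refine ⟨?_, fun hw => ⟨_, hw, rfl⟩⟩
    rintro ⟨⟨w, b⟩, hwb, rfl⟩
    show (w, f w) ∈ S
    by_cases ht : (w, true) ∈ S
    · simp [f, ht]
    · cases b
      · simpa [f, ht] using hwb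
      · exact absurd hwb ht
  rw [himage]
  exact hS.preimage_of_leftInverse (ψ := G.doubleGraphFst) fun _ => rfl

theorem doubleGraph_dist_twins {a b : V} (hab : G.Adj a b) :
    G.doubleGraph.dist (a, false) (a, true) = 2 := by
  have hedist : G.doubleGraph.edist (a, false) (a, true) = 2 :=
    edist_eq_two_iff.2 ⟨by simp, G.irrefl, ⟨(b, false), hab, hab⟩⟩
  simp [dist, hedist]

theorem IsGPSet.not_adj_of_doubleGraph {S : Set (V × Bool)} (hS : G.doubleGraph.IsGPSet S)
    {a b : V} (ha : ∀ c, (a, c) ∈ S) (hb : (b, false) ∈ S) : ¬ G.Adj a b := by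
  intro hab
  let p : G.doubleGraph.Walk (a, false) (a, true) :=
    .cons (show G.doubleGraph.Adj (a, false) (b, false) from hab)
      (.cons (show G.doubleGraph.Adj (b, false) (a, true) from hab.symm) .nil)
  have hp : G.doubleGraph.IsShortestPath p :=
    ⟨by simp [p, Walk.isPath_def, hab.ne, hab.ne.symm], by rw [doubleGraph_dist_twins hab]; rfl⟩
  exact hS p hp _ (ha false) _ hb _ (ha true) (by simp [hab.ne]) (by simp) (by simp)
    (by simp [p])

end SimpleGraph

theorem gp_double_eq_iff_general [Fintype V] (G : SimpleGraph V) :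
    G.doubleGraph.gpNumber = 2 * G.gpNumber ↔
      ∀ S : Finset (V × Bool), G.doubleGraph.IsGPSet ↑S →
        S.card = G.doubleGraph.gpNumber →
        ∃ X : Finset V, G.IsGPSet ↑X ∧ X.card = G.gpNumber ∧
          (∀ a ∈ X, ∀ b ∈ X, ¬ G.Adj a b) ∧ S = X ×ˢ Finset.univ := by
  classical
  have hcard_prod : ∀ X : Finset V, (X ×ˢ (Finset.univ : Finset Bool)).card = 2 * X.card :=
    fun X => by rw [Finset.card_product, Finset.card_univ, Fintype.card_bool, mul_comm]
  constructor
  · intro hgp S hS hcard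
    set X := S.image Prod.fst
    have hX : G.IsGPSet ↑X := by simpa [X] using hS.image_fst_of_doubleGraph
    have hsub : S ⊆ X ×ˢ Finset.univ := fun x hx =>
      Finset.mem_product.2 ⟨Finset.mem_image_of_mem _ hx, Finset.mem_univ _⟩
    have hS_le : S.card ≤ 2 * X.card := hcard_prod X ▸ Finset.card_le_card hsub
    have hX_le : X.card ≤ G.gpNumber := hX.card_le_gpNumber
    have hSX : S = X ×ˢ Finset.univ :=
      Finset.eq_of_subset_of_card_le hsub (by rw [hcard_prod]; omega)
    have hmem : ∀ a ∈ X, ∀ c, (a, c) ∈ (↑S : Set (V × Bool)) := fun a ha c => by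
      simp [hSX, ha]
    exact ⟨X, hX, by omega, fun a ha b hb => hS.not_adj_of_doubleGraph (hmem a ha) (hmem b hb _),
      hSX⟩
  · intro h
    obtain ⟨S, hS, hcard⟩ := G.doubleGraph.exists_isGPSet_card_eq_gpNumber
    obtain ⟨X, -, hX, -, rfl⟩ := h S hS hcard
    rw [← hcard, ← hX, hcard_prod]

theorem gp_double_eq_iff [Fintype V] [DecidableEq V] (G : SimpleGraph V)
    (hconn : G.Connected) :
    G.doubleGraph.gpNumber = 2 * G.gpNumber ↔
      ∀ S : Finset (V × Bool), G.doubleGraph.IsGPSet ↑S →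
        S.card = G.doubleGraph.gpNumber →
        ∃ X : Finset V, G.IsGPSet ↑X ∧ X.card = G.gpNumber ∧
          (∀ a ∈ X, ∀ b ∈ X, ¬ G.Adj a b) ∧ S = X ×ˢ Finset.univ :=
  gp_double_eq_iff_general G
end

section
/- If G is connected, not complete, and diam(G) ≤ 3, then n(G) + μ_o(G) ≤ μ(M(G)) ≤ n(G) + μ(G) + 1; moreover, if μ(M(G)) = n(G) + μ(G) + 1, then every maximum mutual-visibility set of M(G) contains the vertex v*. -/
open SimpleGraph

variable {V : Type*}

/-!
An `M(G)`-walk from `(u, false)` through the apex `v*` has length at least `3` (at least `4` if it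
ends in the original layer), while an apex-free walk projects to a `G`-walk of the same length.
As `diam G ≤ 3`, distances from `(u, false)` to `(v, b)` in `M(G)` are those of `G`, and shortest
paths between original vertices avoid `v*`.

If `S` is an outer mutual-visibility set of `G`, all copies together with the originals of `S`
form a mutual-visibility set of `M(G)`: two copies see each other through `v*`, and the outer
condition provides a shortest `G`-path from `u ∈ S` to any `v ≠ u` whose last edge can be
redirected to the copy of `v`; `(u, false)` reaches `(u, true)` through a neighbour of `u` outside
`S`, which exists because `G` is not complete.

Conversely, if `X` is a mutual-visibility set of `M(G)`, the vertices of `G` whose original and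
copy both lie in `X` form a mutual-visibility set of `G`, so that
`|X| ≤ n(G) + μ(G) + [v* ∈ X]`.
-/
namespace Finset

variable {α : Type*} {P : Finset α → Prop}

lemma sSup_card_le {k : ℕ} (h : ∀ S, P S → S.card ≤ k) :
    sSup {k | ∃ S : Finset α, P S ∧ S.card = k} ≤ k :=
  csSup_le' (by rintro _ ⟨S, hS, rfl⟩; exact h S hS)

variable [Fintype α]

lemma bddAbove_card : BddAbove {k | ∃ S : Finset α, P S ∧ S.card = k} :=
  ⟨Fintype.card α, by rintro _ ⟨T, -, rfl⟩; exact T.card_le_univ⟩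

lemma card_le_sSup_card {S : Finset α} (hS : P S) :
    S.card ≤ sSup {k | ∃ S : Finset α, P S ∧ S.card = k} :=
  le_csSup bddAbove_card ⟨S, hS, rfl⟩

lemma exists_card_eq_sSup_card (h : P ∅) :
    ∃ S, P S ∧ S.card = sSup {k | ∃ S : Finset α, P S ∧ S.card = k} :=
  Nat.sSup_mem (s := {k | ∃ S : Finset α, P S ∧ S.card = k}) ⟨0, ∅, h, rfl⟩ bddAbove_card

lemma card_le_card_filter_mem_both [DecidableEq α] (X : Finset (Option (α × Bool))) :
    X.card ≤ Fintype.card α + (univ.filter fun u => some (u, false) ∈ X ∧ some (u, true) ∈ X).card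
      + if none ∈ X then 1 else 0 := by
  set A := univ.filter fun u => some (u, false) ∈ X
  set B := univ.filter fun u => some (u, true) ∈ X
  have hsplit : X.card ≤ X.eraseNone.card + if none ∈ X then 1 else 0 := by
    split_ifs with h
    · rw [card_eraseNone_of_mem h]; omega
    · rw [card_eraseNone_of_not_mem h]; omega
  have hsub : X.eraseNone ⊆ A ×ˢ {false} ∪ B ×ˢ {true} := by
    rintro ⟨u, _ | _⟩ hu <;> simpa [A, B] using hu
  have hAB : X.eraseNone.card ≤ (A ∪ B).card + (A ∩ B).card :=
    calc X.eraseNone.card ≤ A.card + B.card := by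
          simpa using (card_le_card hsub).trans (card_union_le _ _)
      _ = (A ∪ B).card + (A ∩ B).card := (card_union_add_card_inter A B).symm
  rw [show (univ.filter fun u => some (u, false) ∈ X ∧ some (u, true) ∈ X) = A ∩ B from
    filter_and _ _ _]
  have := (A ∪ B).card_le_univ
  omega

end Finset

namespace SimpleGraph

section Visibility

variable {W : Type*} {H : SimpleGraph W} {S : Set W} {u v w : W}

lemma SVisible.symm (h : H.SVisible S u v) : H.SVisible S v u := by
  obtain ⟨p, ⟨hp, hlen⟩, hS⟩ := h
  exact ⟨p.reverse, ⟨hp.reverse, by rw [Walk.length_reverse, hlen, dist_comm]⟩,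
    fun w hw hwv hwu => hS w (by simpa using hw) hwu hwv⟩

lemma SVisible.of_length_le_dist (p : H.Walk u v) (hp : p.length ≤ H.dist u v)
    (hS : ∀ w ∈ p.support, w ≠ u → w ≠ v → w ∉ S) : H.SVisible S u v :=
  have hlen : p.length = H.dist u v := hp.antisymm (dist_le p)
  ⟨p, ⟨p.isPath_of_length_eq_dist hlen, hlen⟩, hS⟩

lemma SVisible.of_adj_of_adj (huv : u ≠ v) (hnadj : ¬ H.Adj u v) (hu : H.Adj u w)
    (hv : H.Adj w v) (hw : w ∉ S) : H.SVisible S u v := by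
  let p : H.Walk u v := .cons hu (.cons hv .nil)
  refine .of_length_le_dist p (p.reachable.one_lt_dist_of_ne_of_not_adj huv hnadj) ?_
  intro x hx hxu hxv
  simp only [p, Walk.support_cons, Walk.support_nil, List.mem_cons, List.not_mem_nil,
    or_false] at hx
  obtain rfl | rfl | rfl := hx <;> trivial

lemma SVisible.exists_adj_notMem (h : H.SVisible S u v) (huv : u ≠ v) (hnadj : ¬ H.Adj u v) :
    ∃ w, H.Adj u w ∧ w ∉ S := by
  obtain ⟨p, -, hS⟩ := h
  obtain ⟨w, huw, q, rfl⟩ := Walk.exists_eq_cons_of_ne huv p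
  have hwv : w ≠ v := by rintro rfl; exact hnadj huw
  exact ⟨w, huw, hS w (by simp) huw.ne' hwv⟩

lemma IsMVSet.exists_notMem (hS : H.IsMVSet S) (hH : H ≠ ⊤) : ∃ w, w ∉ S := by
  obtain ⟨a, b, hab, hnadj⟩ := ne_top_iff_exists_not_adj.mp hH
  by_cases ha : a ∈ S
  · by_cases hb : b ∈ S
    · obtain ⟨w, -, hw⟩ := (hS a ha b hb hab).exists_adj_notMem hab hnadj
      exact ⟨w, hw⟩
    · exact ⟨b, hb⟩
  · exact ⟨a, ha⟩

lemma IsOuterMVSet.exists_adj_notMem (hS : H.IsOuterMVSet S) (hH : H ≠ ⊤) (hu : u ∈ S) :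
    ∃ w, H.Adj u w ∧ w ∉ S := by
  obtain ⟨x, hx⟩ := hS.1.exists_notMem hH
  by_cases hadj : H.Adj u x
  · exact ⟨x, hadj, hx⟩
  · have hux : u ≠ x := by rintro rfl; exact hx hu
    exact (hS.2 u hu x hx hux).exists_adj_notMem hux hadj

end Visibility

section Mycielskian

variable {G : SimpleGraph V} {u v : V}

lemma exists_walk_mycielskian_of_walk (q : G.Walk u v) :
    ∃ p : G.mycielskian.Walk (some (u, false)) (some (v, false)),
      p.length = q.length ∧ p.support = q.support.map fun w => some (w, false) := by
  induction q with
  | nil => exact ⟨.nil, rfl, rfl⟩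
  | cons h q ih =>
    obtain ⟨p, hlen, hsupp⟩ := ih
    exact ⟨.cons (show G.mycielskian.Adj (some (_, false)) (some (_, false)) from h) p,
      by simp [hlen], by simp [hsupp]⟩

lemma mycielskian_dist_le_dist (h : G.Reachable u v) :
    G.mycielskian.dist (some (u, false)) (some (v, false)) ≤ G.dist u v := by
  obtain ⟨q, hq⟩ := h.exists_walk_length_eq_dist
  obtain ⟨p, hp, -⟩ := exists_walk_mycielskian_of_walk q
  exact hq ▸ hp ▸ dist_le p

lemma exists_walk_of_none_notMem_support {x y : Option (V × Bool)}
    (p : G.mycielskian.Walk x y) {a c : V × Bool} (ha : x = some a) (hc : y = some c)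
    (hp : none ∉ p.support) :
    ∃ q : G.Walk a.1 c.1, q.length = p.length ∧ ∀ w ∈ q.support, ∃ b, some (w, b) ∈ p.support := by
  induction p generalizing a with
  | nil =>
    cases ha.symm.trans hc
    exact ⟨.nil, rfl, fun w hw => ⟨c.2, by simp_all⟩⟩
  | @cons x z y hxz p ih =>
    subst ha
    obtain _ | b := z
    · exact absurd (by simp) hp
    obtain ⟨q, hlen, hsupp⟩ := ih rfl hc (by simp_all)
    have hadj : G.Adj a.1 b.1 := by
      obtain ⟨a, _ | _⟩ := a <;> obtain ⟨b, _ | _⟩ := b <;> first | exact hxz | exact hxz.elim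
    refine ⟨.cons hadj q, by simp [hlen], ?_⟩
    simp only [Walk.support_cons, List.mem_cons, forall_eq_or_imp]
    exact ⟨⟨a.2, by simp⟩, fun w hw => (hsupp w hw).imp fun _ h => by simp [h]⟩

lemma two_le_length_of_walk_none (p : G.mycielskian.Walk (some (u, false)) none) :
    2 ≤ p.length := by
  obtain _ | ⟨h, _ | _⟩ := p
  · exact h.elim
  · simp

lemma three_le_length_of_none_mem_support {y : V × Bool}
    (p : G.mycielskian.Walk (some (u, false)) (some y)) (h : none ∈ p.support) :
    3 ≤ p.length := by
  classical
  have h₁ := two_le_length_of_walk_none (p.takeUntil none h)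
  have h₂ : (p.dropUntil none h).length ≠ 0 := fun h0 =>
    Option.some_ne_none y (Walk.eq_of_length_eq_zero h0).symm
  have := congrArg Walk.length (p.take_spec h)
  rw [Walk.length_append] at this
  omega

lemma four_le_length_of_none_mem_support
    (p : G.mycielskian.Walk (some (u, false)) (some (v, false))) (h : none ∈ p.support) :
    4 ≤ p.length := by
  classical
  have h₁ := two_le_length_of_walk_none (p.takeUntil none h)
  have h₂ := two_le_length_of_walk_none (p.dropUntil none h).reverse
  have := congrArg Walk.length (p.take_spec h)
  rw [Walk.length_append] at this
  rw [Walk.length_reverse] at h₂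
  omega

lemma min_dist_le_length {b : Bool} (p : G.mycielskian.Walk (some (u, false)) (some (v, b))) :
    min (G.dist u v) 3 ≤ p.length := by
  by_cases h : none ∈ p.support
  · exact (min_le_right _ _).trans (three_le_length_of_none_mem_support p h)
  · obtain ⟨q, hq, -⟩ := exists_walk_of_none_notMem_support p rfl rfl h
    exact (min_le_left _ _).trans (hq ▸ dist_le q)

lemma dist_le_mycielskian_dist {b : Bool} (hd : G.dist u v ≤ 3)
    (h : G.mycielskian.Reachable (some (u, false)) (some (v, b))) :
    G.dist u v ≤ G.mycielskian.dist (some (u, false)) (some (v, b)) := by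
  obtain ⟨p, hp⟩ := h.exists_walk_length_eq_dist
  simpa [hd, hp] using min_dist_le_length p

end Mycielskian

section LowerBound

variable {G : SimpleGraph V} {S : Set V} {X : Set (Option (V × Bool))}

lemma mycielskian_sVisible_false_true (hnc : G ≠ ⊤) (hd3 : ∀ u v, G.dist u v ≤ 3)
    (hS : G.IsOuterMVSet S) (hX : ∀ w, some (w, false) ∈ X → w ∈ S) {u : V} (hu : u ∈ S)
    (v : V) : G.mycielskian.SVisible X (some (u, false)) (some (v, true)) := by
  by_cases huv : u = v
  · subst huv
    obtain ⟨w, huw, hw⟩ := hS.exists_adj_notMem hnc hu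
    exact .of_adj_of_adj (by simp) (G.loopless.irrefl u)
      (show G.mycielskian.Adj (some (u, false)) (some (w, false)) from huw)
      (show G.mycielskian.Adj (some (w, false)) (some (u, true)) from huw.symm)
      (fun h => hw (hX w h))
  obtain ⟨q, ⟨hq, hlen⟩, hqS⟩ : G.SVisible S u v := by
    by_cases hv : v ∈ S
    · exact hS.1 u hu v hv huv
    · exact hS.2 u hu v hv huv
  obtain ⟨w, hvw, q', hq'⟩ := Walk.exists_eq_cons_of_ne (Ne.symm huv) q.reverse
  obtain ⟨p', hp'len, hp'supp⟩ := exists_walk_mycielskian_of_walk q'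
  let p : G.mycielskian.Walk (some (v, true)) (some (u, false)) :=
    .cons (show G.mycielskian.Adj (some (v, true)) (some (w, false)) from hvw) p'
  have hplen : p.length = G.dist u v := by
    have := congrArg Walk.length hq'
    simp only [Walk.length_reverse, Walk.length_cons] at this
    simp only [p, Walk.length_cons, hp'len, ← hlen, this]
  have hvq' : v ∉ q'.support := by
    have := hq.reverse.support_nodup
    rw [hq', Walk.support_cons, List.nodup_cons] at this
    exact this.1
  refine SVisible.symm (.of_length_le_dist p ?_ ?_)
  · rw [hplen, G.mycielskian.dist_comm]
    exact dist_le_mycielskian_dist (hd3 u v) p.reverse.reachable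
  · intro z hz hzv hzu
    simp only [p, Walk.support_cons, hp'supp, List.mem_cons, List.mem_map] at hz
    obtain rfl | ⟨x, hx, rfl⟩ := hz
    · exact absurd rfl hzv
    have hxq : x ∈ q.support := by
      have : x ∈ q.reverse.support := by simp [hq', hx]
      simpa using this
    exact fun hxX => hqS x hxq (by rintro rfl; exact hzu rfl) (by rintro rfl; exact hvq' hx)
      (hX x hxX)

lemma isMVSet_mycielskian_of_isOuterMVSet (hnc : G ≠ ⊤) (hd3 : ∀ u v, G.dist u v ≤ 3)
    (hS : G.IsOuterMVSet S) (hnone : none ∉ X) (hX : ∀ w, some (w, false) ∈ X → w ∈ S) :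
    G.mycielskian.IsMVSet X := by
  rintro (_ | ⟨a, _ | _⟩) ha (_ | ⟨c, _ | _⟩) hc hac
  all_goals first | exact absurd ha hnone | exact absurd hc hnone | skip
  · obtain ⟨q, ⟨-, hlen⟩, hqS⟩ := hS.1 a (hX a ha) c (hX c hc) (by simpa using hac)
    obtain ⟨p, hplen, hpsupp⟩ := exists_walk_mycielskian_of_walk q
    refine .of_length_le_dist p ?_ ?_
    · rw [hplen, hlen]
      exact dist_le_mycielskian_dist (hd3 a c) p.reachable
    · intro z hz hza hzc
      rw [hpsupp, List.mem_map] at hz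
      obtain ⟨x, hx, rfl⟩ := hz
      exact fun hxX => hqS x hx (by rintro rfl; exact hza rfl) (by rintro rfl; exact hzc rfl)
        (hX x hxX)
  · exact mycielskian_sVisible_false_true hnc hd3 hS hX (hX a ha) c
  · exact (mycielskian_sVisible_false_true hnc hd3 hS hX (hX c hc) a).symm
  · exact .of_adj_of_adj hac (fun h => h)
      (show G.mycielskian.Adj (some (a, true)) none from trivial)
      (show G.mycielskian.Adj none (some (c, true)) from trivial) hnone

lemma exists_isMVSet_mycielskian_card_eq [Fintype V] (hnc : G ≠ ⊤)
    (hd3 : ∀ u v, G.dist u v ≤ 3) {S : Finset V} (hS : G.IsOuterMVSet ↑S) :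
    ∃ X : Finset (Option (V × Bool)), G.mycielskian.IsMVSet ↑X ∧
      X.card = Fintype.card V + S.card := by
  classical
  refine ⟨(Finset.univ.image fun u => some (u, true)) ∪ S.image fun u => some (u, false),
    isMVSet_mycielskian_of_isOuterMVSet hnc hd3 hS (by simp) (by simp), ?_⟩
  rw [Finset.card_union_of_disjoint (by simp [Finset.disjoint_left]),
    Finset.card_image_of_injective, Finset.card_image_of_injective, Finset.card_univ] <;>
    intro _ _ <;> simp

end LowerBound

section UpperBound

variable {G : SimpleGraph V} {X : Set (Option (V × Bool))}

lemma isMVSet_of_isMVSet_mycielskian (hconn : G.Connected) (hd3 : ∀ u v, G.dist u v ≤ 3)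
    (hX : G.mycielskian.IsMVSet X) :
    G.IsMVSet {u | some (u, false) ∈ X ∧ some (u, true) ∈ X} := by
  rintro u ⟨hu, -⟩ v ⟨hv, -⟩ huv
  obtain ⟨P, ⟨-, hPlen⟩, hPX⟩ := hX _ hu _ hv (by simpa using huv)
  have hP : P.length ≤ G.dist u v := hPlen ▸ mycielskian_dist_le_dist (hconn u v)
  have hPnone : none ∉ P.support := fun h => by
    have := four_le_length_of_none_mem_support P h
    have := hd3 u v
    omega
  obtain ⟨Q, hQlen, hQP⟩ := exists_walk_of_none_notMem_support P rfl rfl hPnone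
  refine .of_length_le_dist Q (hQlen ▸ hP) fun w hw hwu hwv hwX => ?_
  obtain ⟨b, hb⟩ := hQP w hw
  exact hPX _ hb (by simp [hwu]) (by simp [hwv]) (by cases b <;> simp [hwX.1, hwX.2])

end UpperBound

end SimpleGraph

theorem mu_mycielskian_diam3 [Fintype V] (G : SimpleGraph V) (hconn : G.Connected)
    (hnc : G ≠ ⊤) (hdiam : G.diam ≤ 3) :
    (Fintype.card V + G.outerMutualVisibilityNumber ≤ G.mycielskian.mutualVisibilityNumber ∧
      G.mycielskian.mutualVisibilityNumber ≤ Fintype.card V + G.mutualVisibilityNumber + 1) ∧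
    (G.mycielskian.mutualVisibilityNumber = Fintype.card V + G.mutualVisibilityNumber + 1 →
      ∀ S : Finset (Option (V × Bool)), G.mycielskian.IsMVSet ↑S →
        S.card = G.mycielskian.mutualVisibilityNumber → none ∈ S) := by
  classical
  have : Nonempty V := hconn.nonempty
  have hd3 : ∀ u v, G.dist u v ≤ 3 := fun u v =>
    (G.dist_le_diam (G.connected_iff_ediam_ne_top.mp hconn)).trans hdiam
  have hupper (X : Finset (Option (V × Bool))) (hX : G.mycielskian.IsMVSet ↑X) :
      X.card ≤ Fintype.card V + G.mutualVisibilityNumber + if none ∈ X then 1 else 0 := by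
    refine X.card_le_card_filter_mem_both.trans ?_
    gcongr
    exact Finset.card_le_sSup_card (P := fun T : Finset V => G.IsMVSet ↑T)
      (by simpa using isMVSet_of_isMVSet_mycielskian hconn hd3 hX)
  refine ⟨⟨?_, Finset.sSup_card_le fun X hX => (hupper X hX).trans (by split_ifs <;> omega)⟩, ?_⟩
  · obtain ⟨S, hS, hS_card⟩ := Finset.exists_card_eq_sSup_card
      (P := fun S : Finset V => G.IsOuterMVSet ↑S) ⟨by simp [IsMVSet], by simp⟩
    obtain ⟨X, hX, hX_card⟩ := exists_isMVSet_mycielskian_card_eq hnc hd3 hS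
    rw [outerMutualVisibilityNumber, ← hS_card, ← hX_card]
    exact Finset.card_le_sSup_card hX
  · intro heq X hX hX_card
    by_contra hnone
    have := hupper X hX
    rw [if_neg hnone] at this
    omega
end
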